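/- Let k be a countable field and R = k[x,y]. There exists a sequence (f_n)_{n ≥ 1} of elements of R such that: (a) for every nonzero ideal 𝔞 of R, all but finitely many f_n lie in 𝔞 (so the partial sums of Σ f_n form a Cauchy, hence convergent, sequence in the 𝔞-adic sense, compatibly for all 𝔞); and (b) the resulting element of lim_{𝔞 ≠ 0} R/𝔞 determined by the partial sums is not in the image of R. -/

import Mathlib

/-!
Enumerate the nonzero elements `g₀, g₁, …` and all elements `r₀, r₁, …` of the countable
domain `R = k[x,y]`, and fix the non-unit `t = x`. With `qₙ = ∏_{i ≤ n} t gᵢ`, build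
`Sₙ₊₁ = Sₙ + εₙ qₙ` with `εₙ ∈ {0, 1}` chosen so that `qₙ t ∤ Sₙ₊₁ - rₙ`; one choice works
because `qₙ t ∤ qₙ`. The terms `εₙ qₙ` eventually lie in every `(gⱼ)`, hence in every nonzero
ideal, so the partial sums converge in `lim_{𝔞 ≠ 0} R ⧸ 𝔞`. Modulo `qₙ t` the limit is `Sₙ₊₁`,
since all later terms are multiples of `qₙ₊₁`, so it differs from `rₙ` there.
-/

/-- A family of elements of the quotients `R ⧸ 𝔞`, indexed by the nonzero ideals `𝔞`
of `R`, is compatible if it commutes with the natural quotient (transition) maps.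
Such families are exactly the elements of the inverse limit `lim_{𝔞 ≠ 0} R ⧸ 𝔞`. -/
def IsCompatibleFamily {R : Type*} [CommRing R]
    (x : ∀ a : {a : Ideal R // a ≠ ⊥}, R ⧸ a.1) : Prop :=
  ∀ (a b : {a : Ideal R // a ≠ ⊥}) (h : a.1 ≤ b.1),
    Ideal.Quotient.factor h (x a) = x b

open Filter Finset

section SeriesLimit

variable {R : Type*} [CommRing R]

theorem mk_sum_range_eq_of_forall_ge_mem {I : Ideal R} {f : ℕ → R} {n : ℕ}
    (hf : ∀ m ≥ n, f m ∈ I) {N : ℕ} (hN : n ≤ N) :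
    Ideal.Quotient.mk I (∑ i ∈ range N, f i) = Ideal.Quotient.mk I (∑ i ∈ range n, f i) := by
  rw [Ideal.Quotient.eq, ← sum_Ico_eq_sub f hN]
  exact I.sum_mem fun m hm => hf m (mem_Ico.mp hm).1

noncomputable def seriesLimit (f : ℕ → R)
    (hf : ∀ a : Ideal R, a ≠ ⊥ → ∀ᶠ n in atTop, f n ∈ a) (a : {a : Ideal R // a ≠ ⊥}) :
    R ⧸ a.1 :=
  Ideal.Quotient.mk a.1 (∑ i ∈ range (hf a.1 a.2).exists_forall_of_atTop.choose, f i)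

variable {f : ℕ → R} (hf : ∀ a : Ideal R, a ≠ ⊥ → ∀ᶠ n in atTop, f n ∈ a)

theorem eventually_mk_sum_range_eq_seriesLimit (a : {a : Ideal R // a ≠ ⊥}) :
    ∀ᶠ N in atTop, Ideal.Quotient.mk a.1 (∑ i ∈ range N, f i) = seriesLimit f hf a :=
  eventually_atTop.mpr ⟨_, fun _ hN =>
    mk_sum_range_eq_of_forall_ge_mem (hf a.1 a.2).exists_forall_of_atTop.choose_spec hN⟩

theorem isCompatibleFamily_seriesLimit : IsCompatibleFamily (seriesLimit f hf) := by
  intro a b hab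
  obtain ⟨N, hNa, hNb⟩ := ((eventually_mk_sum_range_eq_seriesLimit hf a).and
    (eventually_mk_sum_range_eq_seriesLimit hf b)).exists
  rw [← hNa, ← hNb, Ideal.Quotient.factor_mk]

theorem mk_ne_seriesLimit {r : R} {a : {a : Ideal R // a ≠ ⊥}} {n : ℕ}
    (hfa : ∀ m ≥ n, f m ∈ a.1) (hr : ∑ i ∈ range n, f i - r ∉ a.1) :
    Ideal.Quotient.mk a.1 r ≠ seriesLimit f hf a := by
  obtain ⟨N, hnN, hN⟩ :=
    ((eventually_ge_atTop n).and (eventually_mk_sum_range_eq_seriesLimit hf a)).exists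
  rw [← hN, mk_sum_range_eq_of_forall_ge_mem hfa hnN, ne_comm, Ne, Ideal.Quotient.eq]
  exact hr

end SeriesLimit

section Diagonal

variable {R : Type*} [CommRing R]

theorem not_mul_dvd_or_not_mul_dvd_add [IsDomain R] {q t : R} (hq : q ≠ 0) (ht : ¬IsUnit t)
    (s : R) : ¬q * t ∣ s ∨ ¬q * t ∣ s + q := by
  by_contra! ⟨hs, hsq⟩
  have hdvd : q * t ∣ q * 1 := by simpa using dvd_sub hsq hs
  exact ht (isUnit_of_dvd_one ((mul_dvd_mul_iff_left hq).mp hdvd))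

variable (t : R) (g r : ℕ → R)

def diagModulus (n : ℕ) : R := ∏ i ∈ range (n + 1), t * g i

open scoped Classical in
noncomputable def diagPartialSum : ℕ → R
  | 0 => 0
  | n + 1 => diagPartialSum n +
      if diagModulus t g n * t ∣ diagPartialSum n - r n then diagModulus t g n else 0

noncomputable def diagTerm (n : ℕ) : R := diagPartialSum t g r (n + 1) - diagPartialSum t g r n

theorem sum_range_diagTerm (N : ℕ) :
    ∑ n ∈ range N, diagTerm t g r n = diagPartialSum t g r N := by
  unfold diagTerm
  rw [sum_range_sub, diagPartialSum, sub_zero]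

variable {t g r}

theorem diagModulus_succ (n : ℕ) :
    diagModulus t g (n + 1) = diagModulus t g n * (t * g (n + 1)) :=
  prod_range_succ _ _

theorem diagModulus_ne_zero [NoZeroDivisors R] [Nontrivial R] (ht : t ≠ 0) (hg : ∀ i, g i ≠ 0)
    (n : ℕ) : diagModulus t g n ≠ 0 :=
  prod_ne_zero_iff.mpr fun i _ => mul_ne_zero ht (hg i)

theorem dvd_diagModulus {j n : ℕ} (h : j ≤ n) : g j ∣ diagModulus t g n :=
  (dvd_mul_left _ _).trans (dvd_prod_of_mem _ (mem_range.mpr (Nat.lt_succ_of_le h)))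

theorem diagModulus_mul_dvd {n m : ℕ} (h : n < m) :
    diagModulus t g n * t ∣ diagModulus t g m :=
  calc diagModulus t g n * t ∣ diagModulus t g (n + 1) := by
        rw [diagModulus_succ]
        exact mul_dvd_mul_left _ (dvd_mul_right _ _)
    _ ∣ diagModulus t g m := prod_dvd_prod_of_subset _ _ _ (range_subset_range.mpr (by omega))

theorem diagModulus_dvd_diagTerm (n : ℕ) : diagModulus t g n ∣ diagTerm t g r n := by
  rw [diagTerm, diagPartialSum, add_sub_cancel_left]
  split_ifs
  exacts [dvd_rfl, dvd_zero _]

theorem not_diagModulus_mul_dvd_diagPartialSum_sub [IsDomain R] (ht0 : t ≠ 0) (ht : ¬IsUnit t)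
    (hg : ∀ i, g i ≠ 0) (n : ℕ) :
    ¬diagModulus t g n * t ∣ diagPartialSum t g r (n + 1) - r n := by
  rw [diagPartialSum]
  split_ifs with h
  · rw [add_sub_right_comm]
    exact (not_mul_dvd_or_not_mul_dvd_add (diagModulus_ne_zero ht0 hg n) ht _).resolve_left
      (not_not.mpr h)
  · rwa [add_zero]

theorem exists_series_eventually_dvd_and_avoiding [IsDomain R] [Countable R] {t : R}
    (ht0 : t ≠ 0) (ht : ¬IsUnit t) :
    ∃ f : ℕ → R, (∀ z : R, z ≠ 0 → ∀ᶠ n in atTop, z ∣ f n) ∧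
      ∀ s : R, ∃ d : R, d ≠ 0 ∧ ∃ N, (∀ n ≥ N, d ∣ f n) ∧ ¬d ∣ ∑ i ∈ range N, f i - s := by
  have : Nonempty {z : R // z ≠ 0} := ⟨⟨t, ht0⟩⟩
  obtain ⟨g, hg⟩ := exists_surjective_nat {z : R // z ≠ 0}
  obtain ⟨r, hr⟩ := exists_surjective_nat R
  have hg0 : ∀ i, (Subtype.val ∘ g) i ≠ 0 := fun i => (g i).2
  refine ⟨diagTerm t (Subtype.val ∘ g) r, fun z hz => ?_, fun s => ?_⟩
  · obtain ⟨j, hj⟩ := hg ⟨z, hz⟩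
    filter_upwards [eventually_ge_atTop j] with n hn
    rw [show z = (g j).1 by rw [hj]]
    exact (dvd_diagModulus hn).trans (diagModulus_dvd_diagTerm n)
  · obtain ⟨n, rfl⟩ := hr s
    refine ⟨_, mul_ne_zero (diagModulus_ne_zero ht0 hg0 n) ht0, n + 1,
      fun m hm => (diagModulus_mul_dvd hm).trans (diagModulus_dvd_diagTerm m), ?_⟩
    rw [sum_range_diagTerm]
    exact not_diagModulus_mul_dvd_diagPartialSum_sub ht0 ht hg0 n

end Diagonal

/-- For `R = k[x,y]` with `k` a countable field, there is a sequence `(f n)` in `R`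
such that (a) for every nonzero ideal `𝔞` all but finitely many `f n` lie in `𝔞`,
so the partial sums of `Σ f n` are eventually constant modulo each nonzero ideal
and determine a compatible family `x ∈ lim_{𝔞 ≠ 0} R ⧸ 𝔞`; and (b) `x` is not in
the image of the canonical map `R → lim_{𝔞 ≠ 0} R ⧸ 𝔞`. -/
theorem exists_convergent_series_not_in_image
    (k : Type*) [Field k] [Countable k] :
    ∃ f : ℕ → MvPolynomial (Fin 2) k,
      (∀ a : Ideal (MvPolynomial (Fin 2) k), a ≠ ⊥ →
        ∀ᶠ n in Filter.atTop, f n ∈ a) ∧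
      ∃ x : ∀ a : {a : Ideal (MvPolynomial (Fin 2) k) // a ≠ ⊥},
          MvPolynomial (Fin 2) k ⧸ a.1,
        IsCompatibleFamily x ∧
        (∀ a : {a : Ideal (MvPolynomial (Fin 2) k) // a ≠ ⊥},
          ∀ᶠ N in Filter.atTop,
            Ideal.Quotient.mk a.1 (∑ n ∈ Finset.range N, f n) = x a) ∧
        ∀ r : MvPolynomial (Fin 2) k, ∃ a, Ideal.Quotient.mk a.1 r ≠ x a := by
  have : Countable (MvPolynomial (Fin 2) k) := by
    unfold MvPolynomial; exact AddMonoidAlgebra.coeff_injective.countable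
  have hX : Prime (MvPolynomial.X 0 : MvPolynomial (Fin 2) k) := MvPolynomial.X_prime
  obtain ⟨f, hdvd, havoid⟩ := exists_series_eventually_dvd_and_avoiding hX.ne_zero hX.not_isUnit
  have hmem : ∀ a : Ideal (MvPolynomial (Fin 2) k), a ≠ ⊥ → ∀ᶠ n in atTop, f n ∈ a := by
    intro a ha
    obtain ⟨z, hza, hz⟩ := Submodule.exists_mem_ne_zero_of_ne_bot ha
    exact (hdvd z hz).mono fun n h => a.mem_of_dvd h hza
  refine ⟨f, hmem, seriesLimit f hmem, isCompatibleFamily_seriesLimit hmem,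
    eventually_mk_sum_range_eq_seriesLimit hmem, fun r => ?_⟩
  obtain ⟨d, hd, N, hdf, hdr⟩ := havoid r
  exact ⟨⟨Ideal.span {d}, by simpa using hd⟩, mk_ne_seriesLimit hmem
    (fun n hn => Ideal.mem_span_singleton.mpr (hdf n hn)) (mt Ideal.mem_span_singleton.mp hdr)⟩
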